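/- Let E be a real normed vector space and E' a real Banach space, ε > 0 and 0 ≤ p < 1. Suppose f : E → E' satisfies ‖f(x+y) − f(x) − f(y)‖ ≤ ε(‖x‖^p + ‖y‖^p) for all x, y ∈ E, and moreover that for each fixed x ∈ E the map t ↦ f(tx) from ℝ to E' is continuous. Then the unique additive mapping T : E → E' satisfying ‖f(x) − T(x)‖ ≤ (2ε/(2 − 2^p))‖x‖^p for all x ∈ E is ℝ-linear, i.e. T(tx) = tT(x) for all t ∈ ℝ and x ∈ E. -/

import Mathlib

open Filter Topology Metric

/-!
Hyers' direct method: the Cauchy difference of `f` at `(2ⁿx, 2ⁿx)` controls the step from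
`2⁻ⁿ f(2ⁿx)` to `2⁻ⁿ⁻¹ f(2ⁿ⁺¹x)`, and after rescaling this step is `ε‖x‖ᵖ (2ᵖ/2)ⁿ`, geometric
because `p < 1`. So `2⁻ⁿ f(2ⁿx)` converges to some `T x`; the same rescaling shows that `T` is
additive, within `2ε/(2 − 2ᵖ)·‖x‖ᵖ` of `f`, and the only additive map within `O(‖x‖ᵖ)` of `f`.
For fixed `x`, the additive map `t ↦ T(tx)` is within `O(1)` of the continuous `t ↦ f(tx)` on
`[-1, 1]`, hence bounded near `0`, hence continuous, hence `ℝ`-linear.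
-/

section

variable {E F : Type*} [NormedAddCommGroup E] [NormedSpace ℝ E]
  [NormedAddCommGroup F] [NormedSpace ℝ F] {p : ℝ}

lemma two_rpow_div_two_lt_one (hp : p < 1) : (2 : ℝ) ^ p / 2 < 1 := by
  have := Real.rpow_lt_rpow_of_exponent_lt one_lt_two hp
  rw [Real.rpow_one] at this
  exact (div_lt_one two_pos).2 this

lemma tendsto_two_rpow_div_two_pow_mul (hp : p < 1) (C : ℝ) :
    Tendsto (fun n : ℕ => (2 ^ p / 2) ^ n * C) atTop (𝓝 0) := by
  simpa using (tendsto_pow_atTop_nhds_zero_of_lt_one (by positivity)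
    (two_rpow_div_two_lt_one hp)).mul_const C

lemma inv_two_pow_mul_norm_two_pow_smul_rpow (n : ℕ) (x : E) (p : ℝ) :
    ((2 : ℝ) ^ n)⁻¹ * ‖(2 : ℝ) ^ n • x‖ ^ p = (2 ^ p / 2) ^ n * ‖x‖ ^ p := by
  rw [norm_smul, Real.mul_rpow (by positivity) (norm_nonneg _),
    Real.norm_of_nonneg (by positivity), ← Real.rpow_pow_comm zero_le_two, div_pow]
  ring

lemma map_two_pow_smul {T : E → F} (hT : ∀ x y, T (x + y) = T x + T y) (n : ℕ) (x : E) :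
    T ((2 : ℝ) ^ n • x) = (2 : ℝ) ^ n • T x := by
  have h := map_nsmul (AddMonoidHom.mk' T hT) (2 ^ n) x
  simp only [AddMonoidHom.mk'_apply, ← Nat.cast_smul_eq_nsmul ℝ, Nat.cast_pow,
    Nat.cast_ofNat] at h
  exact h

section Hyers

noncomputable def hyersSeq (f : E → F) (n : ℕ) (x : E) : F :=
  ((2 : ℝ) ^ n)⁻¹ • f ((2 : ℝ) ^ n • x)

-- A junk value where the sequence does not converge.
noncomputable def hyersLimit (f : E → F) (x : E) : F :=
  limUnder atTop fun n => hyersSeq f n x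

variable {ε : ℝ} {f : E → F}

@[simp]
lemma hyersSeq_zero (x : E) : hyersSeq f 0 x = f x := by
  simp [hyersSeq]

lemma hyersSeq_succ (n : ℕ) (x : E) :
    hyersSeq f (n + 1) x = (2 : ℝ)⁻¹ • hyersSeq f n (x + x) := by
  simp only [hyersSeq, ← two_smul ℝ x, smul_smul, pow_succ, mul_inv]
  ring_nf

variable (hf : ∀ x y, ‖f (x + y) - f x - f y‖ ≤ ε * (‖x‖ ^ p + ‖y‖ ^ p))
include hf

lemma norm_hyersSeq_add_sub_le (n : ℕ) (x y : E) :
    ‖hyersSeq f n (x + y) - hyersSeq f n x - hyersSeq f n y‖ ≤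
      (2 ^ p / 2) ^ n * (ε * (‖x‖ ^ p + ‖y‖ ^ p)) := by
  have h : hyersSeq f n (x + y) - hyersSeq f n x - hyersSeq f n y = ((2 : ℝ) ^ n)⁻¹ •
      (f ((2 : ℝ) ^ n • x + (2 : ℝ) ^ n • y) - f ((2 : ℝ) ^ n • x) - f ((2 : ℝ) ^ n • y)) := by
    simp only [hyersSeq, smul_add, smul_sub]
  rw [h, norm_smul, Real.norm_of_nonneg (by positivity)]
  calc _ ≤ ((2 : ℝ) ^ n)⁻¹ * (ε * (‖(2 : ℝ) ^ n • x‖ ^ p + ‖(2 : ℝ) ^ n • y‖ ^ p)) := by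
        gcongr; exact hf _ _
    _ = _ := by
        linear_combination ε * (inv_two_pow_mul_norm_two_pow_smul_rpow n x p +
          inv_two_pow_mul_norm_two_pow_smul_rpow n y p)

lemma dist_hyersSeq_succ_le (x : E) (n : ℕ) :
    dist (hyersSeq f n x) (hyersSeq f (n + 1) x) ≤ ε * ‖x‖ ^ p * (2 ^ p / 2) ^ n := by
  have h : hyersSeq f (n + 1) x - hyersSeq f n x =
      (2 : ℝ)⁻¹ • (hyersSeq f n (x + x) - hyersSeq f n x - hyersSeq f n x) := by
    rw [hyersSeq_succ]; module
  rw [dist_comm, dist_eq_norm, h, norm_smul, Real.norm_of_nonneg (by positivity)]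
  calc _ ≤ (2 : ℝ)⁻¹ * ((2 ^ p / 2) ^ n * (ε * (‖x‖ ^ p + ‖x‖ ^ p))) := by
        gcongr; exact norm_hyersSeq_add_sub_le hf n x x
    _ = _ := by ring

variable [CompleteSpace F]

lemma tendsto_hyersSeq (hp : p < 1) (x : E) :
    Tendsto (fun n => hyersSeq f n x) atTop (𝓝 (hyersLimit f x)) :=
  (cauchySeq_of_le_geometric _ _ (two_rpow_div_two_lt_one hp)
    (dist_hyersSeq_succ_le hf x)).tendsto_limUnder

lemma norm_sub_hyersLimit_le (hp : p < 1) (x : E) :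
    ‖f x - hyersLimit f x‖ ≤ 2 * ε / (2 - 2 ^ p) * ‖x‖ ^ p := by
  have h := dist_le_of_le_geometric_of_tendsto₀ _ _ (two_rpow_div_two_lt_one hp)
    (dist_hyersSeq_succ_le hf x) (tendsto_hyersSeq hf hp x)
  have h2p : (2 : ℝ) ^ p < 2 := by linarith [two_rpow_div_two_lt_one hp]
  rw [hyersSeq_zero, dist_eq_norm] at h
  convert h using 1
  field_simp

lemma hyersLimit_add (hp : p < 1) (x y : E) :
    hyersLimit f (x + y) = hyersLimit f x + hyersLimit f y := by
  have hlim := ((tendsto_hyersSeq hf hp (x + y)).sub (tendsto_hyersSeq hf hp x)).sub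
    (tendsto_hyersSeq hf hp y)
  have hzero : Tendsto (fun n => hyersSeq f n (x + y) - hyersSeq f n x - hyersSeq f n y)
      atTop (𝓝 0) :=
    squeeze_zero_norm (norm_hyersSeq_add_sub_le hf · x y)
      (tendsto_two_rpow_div_two_pow_mul hp _)
  rw [← sub_eq_zero, ← sub_sub]
  exact tendsto_nhds_unique hlim hzero

end Hyers

lemma eq_of_norm_sub_le_mul_rpow {f T T' : E → F} (hT : ∀ x y, T (x + y) = T x + T y)
    (hT' : ∀ x y, T' (x + y) = T' x + T' y) (hp : p < 1) {K : ℝ}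
    (hfT : ∀ x, ‖f x - T x‖ ≤ K * ‖x‖ ^ p) (hfT' : ∀ x, ‖f x - T' x‖ ≤ K * ‖x‖ ^ p) :
    T' = T := by
  funext x
  have hdiff (y : E) : ‖T' y - T y‖ ≤ 2 * K * ‖y‖ ^ p :=
    calc ‖T' y - T y‖ = ‖(f y - T y) - (f y - T' y)‖ := by abel_nf
      _ ≤ K * ‖y‖ ^ p + K * ‖y‖ ^ p := norm_sub_le_of_le (hfT y) (hfT' y)
      _ = 2 * K * ‖y‖ ^ p := by ring
  have hbound (n : ℕ) : ‖T' x - T x‖ ≤ (2 ^ p / 2) ^ n * (2 * K * ‖x‖ ^ p) := by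
    have h : T' x - T x = ((2 : ℝ) ^ n)⁻¹ • (T' ((2 : ℝ) ^ n • x) - T ((2 : ℝ) ^ n • x)) := by
      rw [map_two_pow_smul hT, map_two_pow_smul hT', ← smul_sub, inv_smul_smul₀ (by positivity)]
    rw [h, norm_smul, Real.norm_of_nonneg (by positivity)]
    calc _ ≤ ((2 : ℝ) ^ n)⁻¹ * (2 * K * ‖(2 : ℝ) ^ n • x‖ ^ p) := by gcongr; exact hdiff _
      _ = _ := by
        linear_combination 2 * K * inv_two_pow_mul_norm_two_pow_smul_rpow n x p
  have := ge_of_tendsto' (tendsto_two_rpow_div_two_pow_mul hp _) hbound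
  exact sub_eq_zero.mp (norm_le_zero_iff.mp this)

lemma map_smul_of_norm_sub_le_mul_rpow {f T : E → F} (hT : ∀ x y, T (x + y) = T x + T y)
    (hf : ∀ x, Continuous fun t : ℝ => f (t • x)) (hp : 0 ≤ p) {K : ℝ} (hK : 0 ≤ K)
    (hfT : ∀ x, ‖f x - T x‖ ≤ K * ‖x‖ ^ p) (t : ℝ) (x : E) : T (t • x) = t • T x := by
  let φ : ℝ →+ F := AddMonoidHom.mk' (fun s => T (s • x)) fun s s' => by rw [add_smul, hT]
  obtain ⟨M, hM⟩ := isBounded_iff_forall_norm_le.1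
    ((isCompact_closedBall (0 : ℝ) 1).image (hf x)).isBounded
  have hbdd : Bornology.IsBounded (φ '' closedBall 0 1) := by
    refine isBounded_iff_forall_norm_le.2 ⟨M + K * ‖x‖ ^ p, ?_⟩
    rintro _ ⟨s, hs, rfl⟩
    have hs1 : |s| ≤ 1 := by simpa using hs
    have hsx : ‖s • x‖ ^ p ≤ ‖x‖ ^ p := by
      rw [norm_smul, Real.mul_rpow (norm_nonneg _) (norm_nonneg _)]
      exact mul_le_of_le_one_left (by positivity) (Real.rpow_le_one (abs_nonneg s) hs1 hp)
    calc ‖T (s • x)‖ = ‖f (s • x) - (f (s • x) - T (s • x))‖ := by abel_nf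
      _ ≤ M + K * ‖x‖ ^ p := norm_sub_le_of_le (hM _ ⟨s, hs, rfl⟩)
          ((hfT _).trans (mul_le_mul_of_nonneg_left hsx hK))
  have hφ := φ.continuous_of_isBounded_nhds_zero (closedBall_mem_nhds 0 one_pos) hbdd
  simpa [φ] using map_real_smul φ hφ t 1

end

theorem rassias_stability_linear
    {E E' : Type*} [NormedAddCommGroup E] [NormedSpace ℝ E]
    [NormedAddCommGroup E'] [NormedSpace ℝ E'] [CompleteSpace E']
    (ε p : ℝ) (hε : 0 < ε) (hp0 : 0 ≤ p) (hp1 : p < 1)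
    (f : E → E')
    (hf : ∀ x y : E, ‖f (x + y) - f x - f y‖ ≤ ε * (‖x‖ ^ p + ‖y‖ ^ p))
    (hcont : ∀ x : E, Continuous fun t : ℝ => f (t • x)) :
    ∃ T : E → E',
      ((∀ x y : E, T (x + y) = T x + T y) ∧
        (∀ x : E, ‖f x - T x‖ ≤ 2 * ε / (2 - 2 ^ p) * ‖x‖ ^ p) ∧
        (∀ (t : ℝ) (x : E), T (t • x) = t • T x)) ∧
      (∀ T' : E → E',
        ((∀ x y : E, T' (x + y) = T' x + T' y) ∧
          (∀ x : E, ‖f x - T' x‖ ≤ 2 * ε / (2 - 2 ^ p) * ‖x‖ ^ p)) → T' = T) := by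
  have hadd := hyersLimit_add hf hp1
  have hbound := norm_sub_hyersLimit_le hf hp1
  have hK : 0 ≤ 2 * ε / (2 - 2 ^ p) :=
    div_nonneg (by positivity) (by linarith [two_rpow_div_two_lt_one hp1])
  refine ⟨hyersLimit f, ⟨hadd, hbound, map_smul_of_norm_sub_le_mul_rpow hadd hcont hp0 hK hbound⟩,
    fun T' ⟨hT'add, hT'bound⟩ => eq_of_norm_sub_le_mul_rpow hadd hT'add hp1 hbound hT'bound⟩
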